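/- arXiv:0708.0798 — 2 statements merged into one kernel-verified Lean document; each statement's English description precedes it below -/
import Mathlib

section
/- For any α ∈ ℤⁿ, there exist unique μ, γ ∈ ℕⁿ with disjoint support such that α = μ − (Eᵗ)⁻¹γ, where E is the Euler matrix of a finite quiver Q without oriented cycles. Moreover if α ∈ ℕⁿ then μ = α and γ = 0. -/
open Matrix BigOperators

/-- A finite quiver on vertex set `Fin n`, given by arrow multiplicities, with no oriented
cycles (encoded by a topological ordering of the vertices: every arrow goes strictly up). -/
structure AcyclicQuiver (n : ℕ) where
  arrows : Fin n → Fin n → ℕ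
  acyclic : ∀ u v : Fin n, arrows u v ≠ 0 → u < v

namespace AcyclicQuiver

variable {n : ℕ}

/-- The Euler matrix: diagonal entries `1`, off-diagonal entry `(u,v)` is
minus the number of arrows `u → v`. -/
def eulerMatrix (Q : AcyclicQuiver n) : Matrix (Fin n) (Fin n) ℤ :=
  Matrix.of fun u v => if u = v then 1 else -(Q.arrows u v : ℤ)

/-- The (non-symmetric) Euler bilinear form `⟨α,β⟩ = αᵗ E β`. -/
def eulerForm (Q : AcyclicQuiver n) (α β : Fin n → ℤ) : ℤ :=
  α ⬝ᵥ (Q.eulerMatrix *ᵥ β)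

/-- The Euler form over `ℝ`. -/
def eulerFormR (Q : AcyclicQuiver n) (α β : Fin n → ℝ) : ℝ :=
  α ⬝ᵥ ((Q.eulerMatrix.map (Int.cast : ℤ → ℝ)) *ᵥ β)

/-- The adjacency (arrow-count) matrix of the quiver. -/
def arrowMatrix (Q : AcyclicQuiver n) : Matrix (Fin n) (Fin n) ℕ :=
  Matrix.of fun u v => Q.arrows u v

/-- The number of directed paths from `u` to `v`.  Since the quiver is acyclic, every
path has length `< n`, and paths of length `k` are counted by the `k`-th power of the
adjacency matrix. -/
def pathCount (Q : AcyclicQuiver n) (u v : Fin n) : ℕ :=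
  (∑ k ∈ Finset.range n, Q.arrowMatrix ^ k) u v

end AcyclicQuiver


noncomputable def auxg {n : ℕ} (N : Matrix (Fin n) (Fin n) ℤ) (α : Fin n → ℤ) : Fin n → ℕ
  | v => (-(α v + ∑ u ∈ (Finset.Iio v).attach, N v u.1 * auxg N α u.1)).toNat
  termination_by v => v.1
  decreasing_by exact Fin.lt_def.mp (Finset.mem_Iio.mp u.2)

lemma auxg_spec {n : ℕ} (N : Matrix (Fin n) (Fin n) ℤ) (α : Fin n → ℤ) (v : Fin n) :
    auxg N α v = (-(α v + ∑ u ∈ Finset.Iio v, N v u * auxg N α u)).toNat := by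
  rw [auxg, Finset.sum_attach (Finset.Iio v) (fun u => N v u * auxg N α u)]

lemma mulVec_split {n : ℕ} (N : Matrix (Fin n) (Fin n) ℤ)
    (hdiag : ∀ v, N v v = 1) (hlow : ∀ u v : Fin n, u < v → N u v = 0)
    (γ : Fin n → ℤ) (v : Fin n) :
    (N *ᵥ γ) v = γ v + ∑ u ∈ Finset.Iio v, N v u * γ u := by
  have h1 : (N *ᵥ γ) v = ∑ u, N v u * γ u := rfl
  rw [h1]
  rw [← Finset.sum_subset (Finset.subset_univ (Finset.Iic v))
    (fun u _ hu => by
      rw [hlow v u (by simpa using hu), zero_mul])]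
  rw [← Finset.Iio_insert, Finset.sum_insert (by simp), hdiag, one_mul]

lemma nat_recon {a b a' b' : ℕ} (h : (a:ℤ) - b = (a':ℤ) - b')
    (h1 : a = 0 ∨ b = 0) (h2 : a' = 0 ∨ b' = 0) : a = a' ∧ b = b' := by omega

lemma keyLemma {n : ℕ} (N : Matrix (Fin n) (Fin n) ℤ)
    (hdiag : ∀ v, N v v = 1) (hlow : ∀ u v : Fin n, u < v → N u v = 0) (α : Fin n → ℤ) :
    ∃! p : (Fin n → ℕ) × (Fin n → ℕ),
      (∀ v, p.1 v = 0 ∨ p.2 v = 0) ∧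
      ∀ v, α v = (p.1 v : ℤ) - (N *ᵥ fun u => (p.2 u : ℤ)) v := by
  set γ₀ : Fin n → ℕ := auxg N α with hγ₀
  set S : Fin n → ℤ := fun v => ∑ u ∈ Finset.Iio v, N v u * γ₀ u with hS
  set μ₀ : Fin n → ℕ := fun v => (α v + S v).toNat with hμ₀
  have hγeq : ∀ v, (γ₀ v : ℤ) = (-(α v + S v)).toNat := by
    intro v; rw [hγ₀, auxg_spec]
  have hdisj : ∀ v, μ₀ v = 0 ∨ γ₀ v = 0 := by
    intro v
    have := hγeq v
    simp only [hμ₀]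
    omega
  have hsub : ∀ v, (μ₀ v : ℤ) - γ₀ v = α v + S v := by
    intro v
    have := hγeq v
    simp only [hμ₀]
    omega
  have heq : ∀ v, α v = (μ₀ v : ℤ) - (N *ᵥ fun u => (γ₀ u : ℤ)) v := by
    intro v
    rw [mulVec_split N hdiag hlow _ v]
    have := hsub v
    simp only [hS] at *
    linarith
  refine ⟨(μ₀, γ₀), ⟨hdisj, heq⟩, ?_⟩
  rintro ⟨μ, γ⟩ ⟨hd, he⟩
  have hγ : ∀ m, ∀ v : Fin n, v.val < m → γ v = γ₀ v ∧ μ v = μ₀ v := by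
    intro m
    induction m with
    | zero => intro v hv; omega
    | succ m ih =>
      intro v hv
      rcases lt_or_eq_of_le (Nat.lt_succ_iff.mp hv) with h | h
      · exact ih v h
      · have hsum : ∑ u ∈ Finset.Iio v, N v u * (γ u : ℤ) = S v := by
          apply Finset.sum_congr rfl
          intro u hu
          have := (ih u (by have := Finset.mem_Iio.mp hu; omega)).1
          rw [this]
        have h1 := he v
        rw [mulVec_split N hdiag hlow _ v, hsum] at h1
        have h2 : (μ v : ℤ) - γ v = (μ₀ v : ℤ) - γ₀ v := by
          have := hsub v; linarith
        have := nat_recon h2 (hd v).symm.symm (hdisj v)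
        exact ⟨this.2, this.1⟩
  have h1 : γ = γ₀ := funext fun v => (hγ n v v.isLt).1
  have h2 : μ = μ₀ := funext fun v => (hγ n v v.isLt).2
  simp [h1, h2]

namespace AcyclicQuiver
variable {n : ℕ}

/-- transpose of the arrow matrix over ℤ -/
def Bt (Q : AcyclicQuiver n) : Matrix (Fin n) (Fin n) ℤ :=
  Matrix.of fun u v => (Q.arrows v u : ℤ)

lemma arrows_self (Q : AcyclicQuiver n) (v : Fin n) : Q.arrows v v = 0 := by
  by_contra h
  exact absurd (Q.acyclic v v h) (lt_irrefl v)

lemma eulerT_eq (Q : AcyclicQuiver n) : Q.eulerMatrix.transpose = 1 - Q.Bt := by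
  ext u v
  simp only [Matrix.transpose_apply, eulerMatrix, Bt, Matrix.sub_apply, Matrix.one_apply,
    Matrix.of_apply]
  rcases eq_or_ne v u with h | h
  · subst h; simp [arrows_self]
  · simp [h, Ne.symm h]

lemma Bt_pow (Q : AcyclicQuiver n) : ∀ k, ∀ u v : Fin n,
    (Q.Bt ^ k) u v ≠ 0 → v.val + k ≤ u.val := by
  intro k
  induction k with
  | zero =>
    intro u v h
    rw [pow_zero, Matrix.one_apply] at h
    split at h
    · omega
    · simp at h
  | succ k ih =>
    intro u v h
    rw [pow_succ', Matrix.mul_apply] at h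
    obtain ⟨w, _, hw⟩ := Finset.exists_ne_zero_of_sum_ne_zero h
    have h1 : Q.Bt u w ≠ 0 := fun hz => hw (by rw [hz, zero_mul])
    have h2 : (Q.Bt ^ k) w v ≠ 0 := fun hz => hw (by rw [hz, mul_zero])
    have h3 : Q.arrows w u ≠ 0 := by simpa [Bt] using h1
    have h4 := Q.acyclic w u h3
    have h5 := ih w v h2
    have : w.val < u.val := h4
    omega

noncomputable def NN (Q : AcyclicQuiver n) : Matrix (Fin n) (Fin n) ℤ :=
  ∑ k ∈ Finset.range n, Q.Bt ^ k

lemma Bt_pow_n (Q : AcyclicQuiver n) : Q.Bt ^ n = 0 := by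
  ext u v
  by_contra h
  have := Q.Bt_pow n u v h
  have := u.isLt
  omega

lemma NN_mul (Q : AcyclicQuiver n) : Q.NN * (1 - Q.Bt) = 1 := by
  have h1 : Q.NN * Q.Bt - Q.NN = Q.Bt ^ n - 1 := by
    have h := geom_sum_mul Q.Bt n
    rwa [mul_sub, mul_one] at h
  rw [Bt_pow_n] at h1
  rw [mul_sub, mul_one]
  have : Q.NN - Q.NN * Q.Bt = -(Q.NN * Q.Bt - Q.NN) := by abel
  rw [this, h1]
  abel

lemma euler_inv_eq (Q : AcyclicQuiver n) : Q.eulerMatrix.transpose⁻¹ = Q.NN := by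
  apply Matrix.inv_eq_left_inv
  rw [eulerT_eq, NN_mul]

lemma NN_diag (Q : AcyclicQuiver n) (v : Fin n) : Q.NN v v = 1 := by
  rw [NN, Matrix.sum_apply]
  rw [Finset.sum_eq_single_of_mem 0 (Finset.mem_range.mpr v.pos)]
  · simp
  · intro k _ hk
    by_contra h
    have := Q.Bt_pow k v v h
    omega

lemma NN_low (Q : AcyclicQuiver n) (u v : Fin n) (h : u < v) : Q.NN u v = 0 := by
  rw [NN, Matrix.sum_apply]
  apply Finset.sum_eq_zero
  intro k _
  by_contra hk
  have := Q.Bt_pow k u v hk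
  have : u.val < v.val := h
  omega

end AcyclicQuiver


/-- Every `α ∈ ℤⁿ` has a unique decomposition `α = μ − (Eᵗ)⁻¹γ`
with `μ, γ ∈ ℕⁿ` of disjoint support; moreover if `α ∈ ℕⁿ` then `μ = α` and `γ = 0`. -/
theorem canonical_decomposition_existsUnique {n : ℕ} (Q : AcyclicQuiver n) (α : Fin n → ℤ) :
    (∃! p : (Fin n → ℕ) × (Fin n → ℕ),
      (∀ v, p.1 v = 0 ∨ p.2 v = 0) ∧
      ∀ v, α v = (p.1 v : ℤ) - (Q.eulerMatrix.transpose⁻¹ *ᵥ fun u => (p.2 u : ℤ)) v) ∧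
    ((∀ v, 0 ≤ α v) → ∀ p : (Fin n → ℕ) × (Fin n → ℕ),
      ((∀ v, p.1 v = 0 ∨ p.2 v = 0) ∧
        ∀ v, α v = (p.1 v : ℤ) - (Q.eulerMatrix.transpose⁻¹ *ᵥ fun u => (p.2 u : ℤ)) v) →
      (∀ v, (p.1 v : ℤ) = α v) ∧ p.2 = 0) := by
  rw [Q.euler_inv_eq]
  constructor
  · exact keyLemma Q.NN Q.NN_diag Q.NN_low α
  · intro hα p hp
    obtain ⟨p₀, hp₀, huniq⟩ := keyLemma Q.NN Q.NN_diag Q.NN_low α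
    set q : (Fin n → ℕ) × (Fin n → ℕ) := (fun v => (α v).toNat, 0) with hq
    have hqprop : (∀ v, q.1 v = 0 ∨ q.2 v = 0) ∧
        ∀ v, α v = (q.1 v : ℤ) - (Q.NN *ᵥ fun u => (q.2 u : ℤ)) v := by
      constructor
      · intro v; right; rfl
      · intro v
        have h0 : (fun u => ((q.2 u : ℤ))) = (0 : Fin n → ℤ) := by
          funext u; simp [hq]
        rw [h0, Matrix.mulVec_zero]
        have := hα v
        simp [hq]
        omega
    have h1 := huniq p hp
    have h2 := huniq q hqprop
    have h3 : p = q := h1.trans h2.symm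
    rw [h3]
    constructor
    · intro v
      have := hα v
      simp [hq]
      omega
    · rfl
end

section
/- Let Q be a finite quiver without oriented cycles, v a vertex, and β ∈ ℕⁿ. The following are equivalent: (1) β_v = 0; (2) dim P(v) ∈ D(β); (3) −dim P(v) ∈ D(β), where D(β) is as above. -/
open Matrix BigOperators

namespace AcyclicQuiver

variable {n : ℕ}

lemma pow_arrow_ne_zero (Q : AcyclicQuiver n) :
    ∀ k (u w : Fin n), (Q.arrowMatrix ^ k) u w ≠ 0 → u.val + k ≤ w.val := by
  intro k
  induction k with
  | zero =>
    intro u w h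
    rw [pow_zero, Matrix.one_apply] at h
    rcases eq_or_ne u w with h' | h'
    · subst h'; omega
    · simp [h'] at h
  | succ k ih =>
    intro u w h
    rw [pow_succ, Matrix.mul_apply] at h
    obtain ⟨m, -, hm⟩ := Finset.exists_ne_zero_of_sum_ne_zero h
    have h1 := ih u m (by intro h0; simp [h0] at hm)
    have h2 : Q.arrows m w ≠ 0 := by intro h0; simp [arrowMatrix, h0] at hm
    have := Q.acyclic m w h2
    omega

lemma pow_arrow_n (Q : AcyclicQuiver n) : Q.arrowMatrix ^ n = 0 := by
  ext u w
  by_contra h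
  have := Q.pow_arrow_ne_zero n u w h
  omega

/-- The integer adjacency matrix. -/
def arrowMatrixZ (Q : AcyclicQuiver n) : Matrix (Fin n) (Fin n) ℤ :=
  (Nat.castRingHom ℤ).mapMatrix Q.arrowMatrix

lemma eulerMatrix_eq (Q : AcyclicQuiver n) :
    Q.eulerMatrix = 1 - Q.arrowMatrixZ := by
  ext u w
  by_cases h : u = w
  · subst h
    have : Q.arrows u u = 0 := by
      by_contra h0
      exact absurd (Q.acyclic u u h0) (lt_irrefl u)
    simp [eulerMatrix, arrowMatrixZ, arrowMatrix, Matrix.one_apply, this]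
  · simp [eulerMatrix, arrowMatrixZ, arrowMatrix, Matrix.one_apply, h]

lemma sum_mul_euler (Q : AcyclicQuiver n) :
    (∑ k ∈ Finset.range n, Q.arrowMatrixZ ^ k) * Q.eulerMatrix = 1 := by
  rw [eulerMatrix_eq, Matrix.mul_sub, Matrix.mul_one, Finset.sum_mul]
  have h1 : ∀ k ∈ Finset.range n,
      Q.arrowMatrixZ ^ k * Q.arrowMatrixZ = Q.arrowMatrixZ ^ (k + 1) := by
    intro k _; rw [pow_succ]
  rw [Finset.sum_congr rfl h1]
  have h2 : Q.arrowMatrixZ ^ n = 0 := by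
    have := congrArg (Nat.castRingHom ℤ).mapMatrix Q.pow_arrow_n
    rwa [map_pow, map_zero] at this
  have := Finset.sum_range_sub (fun k => Q.arrowMatrixZ ^ k) n
  have heq : ∑ k ∈ Finset.range n, (Q.arrowMatrixZ ^ (k + 1) - Q.arrowMatrixZ ^ k)
      = Q.arrowMatrixZ ^ n - Q.arrowMatrixZ ^ 0 := this
  rw [Finset.sum_sub_distrib] at heq
  rw [h2, pow_zero] at heq
  have : (∑ k ∈ Finset.range n, Q.arrowMatrixZ ^ k)
      - ∑ k ∈ Finset.range n, Q.arrowMatrixZ ^ (k + 1) = 1 := by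
    linear_combination (norm := abel) -heq
  linear_combination (norm := abel) this

lemma pathCount_int (Q : AcyclicQuiver n) (u w : Fin n) :
    (Q.pathCount u w : ℤ) = (∑ k ∈ Finset.range n, Q.arrowMatrixZ ^ k) u w := by
  have h : (Nat.castRingHom ℤ).mapMatrix (∑ k ∈ Finset.range n, Q.arrowMatrix ^ k)
      = ∑ k ∈ Finset.range n, Q.arrowMatrixZ ^ k := by
    rw [map_sum]
    exact Finset.sum_congr rfl fun k _ => map_pow _ _ _
  rw [pathCount, ← h]
  rfl

lemma eulerForm_pathCount (Q : AcyclicQuiver n) (v : Fin n) (γ : Fin n → ℤ) :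
    Q.eulerForm (fun u => (Q.pathCount v u : ℤ)) γ = γ v := by
  set S := ∑ k ∈ Finset.range n, Q.arrowMatrixZ ^ k with hS
  have hp : (fun u => (Q.pathCount v u : ℤ)) = S v := by
    funext u; exact Q.pathCount_int v u
  rw [eulerForm, hp, Matrix.dotProduct_mulVec]
  have : S v ᵥ* Q.eulerMatrix = (S * Q.eulerMatrix) v := by
    funext u
    simp [Matrix.vecMul, Matrix.mul_apply, dotProduct]
  rw [this, Q.sum_mul_euler]
  simp [dotProduct, Matrix.one_apply]

end AcyclicQuiver

/-- For a vertex `v` and `β ∈ ℕⁿ`, the following are equivalent: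
`β_v = 0`; `dim P(v) ∈ D(β)`; `−dim P(v) ∈ D(β)`.  Here `dim P(v)` at `u` is the
number of paths `v → u`, and `D(β)` is cut out by `⟨α,β⟩ = 0` and `⟨α,β'⟩ ≤ 0` for
all `β' ≤ β` coordinatewise. -/
theorem dimProj_mem_D_iff {n : ℕ} (Q : AcyclicQuiver n) (v : Fin n) (β : Fin n → ℕ) :
    let D : Set (Fin n → ℤ) :=
      {α | Q.eulerForm α (fun u => (β u : ℤ)) = 0 ∧
        ∀ β' : Fin n → ℕ, (∀ u, β' u ≤ β u) →
          Q.eulerForm α (fun u => (β' u : ℤ)) ≤ 0}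
    (β v = 0 ↔ (fun u => (Q.pathCount v u : ℤ)) ∈ D) ∧
    (β v = 0 ↔ (fun u => -(Q.pathCount v u : ℤ)) ∈ D) := by
  intro D
  have key : ∀ γ : Fin n → ℤ,
      Q.eulerForm (fun u => (Q.pathCount v u : ℤ)) γ = γ v :=
    Q.eulerForm_pathCount v
  have keyneg : ∀ γ : Fin n → ℤ,
      Q.eulerForm (fun u => -(Q.pathCount v u : ℤ)) γ = -γ v := by
    intro γ
    have : (fun u => -(Q.pathCount v u : ℤ)) = -(fun u => (Q.pathCount v u : ℤ)) := rfl
    rw [this, AcyclicQuiver.eulerForm, neg_dotProduct,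
      ← AcyclicQuiver.eulerForm, key]
  constructor
  · constructor
    · intro hv
      refine ⟨by rw [key]; exact_mod_cast hv, fun β' hβ' => ?_⟩
      rw [key]
      have : β' v = 0 := Nat.le_zero.mp (hv ▸ hβ' v)
      simp [this]
    · intro ⟨h1, _⟩
      rw [key] at h1
      exact_mod_cast h1
  · constructor
    · intro hv
      refine ⟨by rw [keyneg]; simp [hv], fun β' hβ' => ?_⟩
      rw [keyneg]
      simp
    · intro ⟨h1, _⟩
      rw [keyneg, neg_eq_zero] at h1
      exact_mod_cast h1
end
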